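/- Every nonempty compact metric space X admits an isometry-invariant Borel probability measure: there exists a Borel probability measure μ on X such that for every bijective isometry g : X → X, the pushforward of μ under g equals μ. -/

import Mathlib

/-
The isometries of a compact metric space form a compact topological group under the metric of
uniform convergence: that metric is invariant under composition on both sides, and by
Arzelà–Ascoli the isometries of `X` into itself form a compact set of maps, in which the
surjective ones are closed. The image of the normalized Haar measure of this group under an
orbit map `g ↦ g x₀` is then a probability measure on `X` invariant under every isometry.
-/

open MeasureTheory

section BiInvariantMetric

variable {G : Type*} [Group G] [PseudoMetricSpace G] [IsIsometricSMul G G]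
  [IsIsometricSMul Gᵐᵒᵖ G]

theorem lipschitzWith_mul_of_isIsometricSMul : LipschitzWith 2 fun p : G × G => p.1 * p.2 :=
  .of_dist_le_mul fun p q => calc
    dist (p.1 * p.2) (q.1 * q.2) ≤ dist (p.1 * p.2) (p.1 * q.2) + dist (p.1 * q.2) (q.1 * q.2) :=
      dist_triangle _ _ _
    _ = dist p.2 q.2 + dist p.1 q.1 := by rw [dist_mul_left, dist_mul_right]
    _ ≤ 2 * dist p q := by
      rw [Prod.dist_eq, two_mul, add_comm]
      exact add_le_add (le_max_left _ _) (le_max_right _ _)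

theorem IsTopologicalGroup.of_isIsometricSMul : IsTopologicalGroup G where
  continuous_mul := lipschitzWith_mul_of_isIsometricSMul.continuous
  continuous_inv := isometry_inv.continuous

end BiInvariantMetric

theorem isCompact_setOf_isometry {X Y : Type*} [PseudoMetricSpace X] [PseudoMetricSpace Y]
    [CompactSpace Y] : IsCompact {f : C(X, Y) | Isometry f} := by
  refine ArzelaAscoli.isCompact_of_equicontinuous _ ?_ fun x => ?_
  · have h_image : ContinuousMap.toFun '' {f : C(X, Y) | Isometry f} =
        ⋂ (x) (y), {f : X → Y | dist (f x) (f y) = dist x y} := by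
      ext f
      simp only [Set.mem_image, Set.mem_ofPred_eq, Set.mem_iInter]
      refine ⟨?_, fun hf => ⟨⟨f, (Isometry.of_dist_eq hf).continuous⟩, .of_dist_eq hf, rfl⟩⟩
      rintro ⟨f, hf, rfl⟩
      exact hf.dist_eq
    rw [h_image]
    exact (isClosed_iInter fun x => isClosed_iInter fun y =>
      isClosed_eq (by fun_prop) continuous_const).isCompact
  · rw [Metric.equicontinuousAt_iff_right]
    intro ε hε
    filter_upwards [Metric.ball_mem_nhds x hε] with y hy f
    rw [f.2.dist_eq]
    exact Metric.mem_ball'.mp hy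

namespace IsometryEquiv

section PseudoEMetricSpace

variable {X Y : Type*} [PseudoEMetricSpace X] [PseudoEMetricSpace Y]

def toContinuousMap (f : X ≃ᵢ Y) : C(X, Y) :=
  ⟨f, f.continuous⟩

@[simp]
theorem toContinuousMap_apply (f : X ≃ᵢ Y) (x : X) : f.toContinuousMap x = f x :=
  rfl

instance : MulAction (X ≃ᵢ X) X where
  smul f x := f x
  one_smul _ := rfl
  mul_smul _ _ _ := rfl

end PseudoEMetricSpace

variable {X : Type*} [MetricSpace X] [CompactSpace X]

noncomputable instance : MetricSpace (X ≃ᵢ X) :=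
  MetricSpace.induced toContinuousMap (fun _ _ h => ext fun x => DFunLike.congr_fun h x)
    inferInstance

theorem isometry_toContinuousMap : Isometry (toContinuousMap : X ≃ᵢ X → C(X, X)) :=
  .of_dist_eq fun _ _ => rfl

theorem dist_eq_iSup (f g : X ≃ᵢ X) : dist f g = ⨆ x, dist (f x) (g x) :=
  ContinuousMap.dist_eq_iSup

instance : IsIsometricSMul (X ≃ᵢ X) (X ≃ᵢ X) :=
  ⟨fun h => .of_dist_eq fun f g => by simp only [smul_eq_mul, dist_eq_iSup, mul_apply, h.dist_eq]⟩

instance : IsIsometricSMul (X ≃ᵢ X)ᵐᵒᵖ (X ≃ᵢ X) :=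
  ⟨fun h => .of_dist_eq fun f g => by
    simp only [MulOpposite.smul_eq_mul_unop, dist_eq_iSup, mul_apply]
    exact h.unop.surjective.iSup_comp fun x => dist (f x) (g x)⟩

instance : IsTopologicalGroup (X ≃ᵢ X) :=
  .of_isIsometricSMul

/-- A uniform limit `F` of surjective isometries has dense, hence full, range: every `y` is
`f (f⁻¹ y)`, which is close to `F (f⁻¹ y)`. -/
theorem isClosed_range_toContinuousMap :
    IsClosed (Set.range (toContinuousMap : X ≃ᵢ X → C(X, X))) := by
  refine isClosed_of_closure_subset fun F hF => ?_
  have hF_isometry : Isometry F := isCompact_setOf_isometry.isClosed.closure_subset_iff.2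
    (Set.range_subset_iff.2 fun f => f.isometry) hF
  have hF_dense (y : X) : y ∈ closure (Set.range F) := Metric.mem_closure_iff.2 fun ε hε => by
    obtain ⟨_, ⟨f, rfl⟩, hf⟩ := Metric.mem_closure_iff.1 hF ε hε
    have h_close := (ContinuousMap.dist_apply_le_dist (f.symm y)).trans_lt (dist_comm F _ ▸ hf)
    rw [toContinuousMap_apply, apply_symm_apply] at h_close
    exact ⟨F (f.symm y), Set.mem_range_self _, h_close⟩
  have hF_surjective : Function.Surjective F := fun y => by
    simpa [(isCompact_range F.continuous).isClosed.closure_eq] using hF_dense y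
  exact ⟨⟨.ofBijective F ⟨hF_isometry.injective, hF_surjective⟩, hF_isometry⟩, rfl⟩

instance : CompactSpace (X ≃ᵢ X) := by
  rw [← isCompact_univ_iff, isometry_toContinuousMap.isEmbedding.isCompact_iff, Set.image_univ]
  exact isCompact_setOf_isometry.of_isClosed_subset isClosed_range_toContinuousMap
    (Set.range_subset_iff.2 fun f => f.isometry)

instance : ContinuousSMul (X ≃ᵢ X) X :=
  ⟨(continuous_eval (F := C(X, X))).comp
    (isometry_toContinuousMap.continuous.prodMap continuous_id)⟩

end IsometryEquiv

theorem exists_isProbabilityMeasure_map_smul_eq {G X : Type*} [Group G] [TopologicalSpace G]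
    [IsTopologicalGroup G] [CompactSpace G] [TopologicalSpace X] [MeasurableSpace X]
    [BorelSpace X] [MulAction G X] [ContinuousSMul G X] [Nonempty X] :
    ∃ μ : Measure X, IsProbabilityMeasure μ ∧ ∀ g : G, μ.map (g • ·) = μ := by
  borelize G
  let ν : Measure G := Measure.haarMeasure ⊤
  have : IsProbabilityMeasure ν :=
    ⟨by simpa using Measure.haarMeasure_self (K₀ := (⊤ : TopologicalSpace.PositiveCompacts G))⟩
  obtain ⟨x₀⟩ := ‹Nonempty X›
  have h_orbit : Measurable fun g : G => g • x₀ := (continuous_id.smul continuous_const).measurable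
  refine ⟨ν.map (· • x₀), Measure.isProbabilityMeasure_map h_orbit.aemeasurable, fun g => ?_⟩
  have h_equivariant : (g • ·) ∘ (· • x₀) = (· • x₀) ∘ (g * ·) :=
    funext fun h => (mul_smul g h x₀).symm
  rw [Measure.map_map (continuous_const_smul (T := X) g).measurable h_orbit, h_equivariant,
    ← Measure.map_map h_orbit (measurable_const_mul g), map_mul_left_eq_self]

theorem exists_isometry_invariant_measure
    {X : Type*} [MetricSpace X] [CompactSpace X] [Nonempty X]
    [MeasurableSpace X] [BorelSpace X] :
    ∃ μ : Measure X, IsProbabilityMeasure μ ∧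
      ∀ g : X → X, Function.Bijective g → Isometry g → μ.map g = μ := by
  obtain ⟨μ, hμ, h_invariant⟩ := exists_isProbabilityMeasure_map_smul_eq (G := X ≃ᵢ X) (X := X)
  exact ⟨μ, hμ, fun g hg_bijective hg_isometry =>
    h_invariant ⟨.ofBijective g hg_bijective, hg_isometry⟩⟩
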